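/- Under the standing hypotheses, the function Z(t) = (1 + m_s Y_{B/s}/k_d)·X(t) + α·B(t) + α·Y_{B/s}·s(t) is nonnegative and nonincreasing along solutions, hence converges to a finite limit Z∞ ≥ 0 as t → +∞, and consequently X(t), B(t), s(t) are bounded on [0, ∞). -/

import Mathlib

/-!
Differentiating `Z` along the system, the `B`-terms cancel exactly (this is what the weight
`1 + m_s Y_{B/s} / k_d` on `X` is chosen for), leaving `Z' = K_H (α Y_{B/s} - c) X` with
`c = 1 + m_s Y_{B/s} / k_d ≥ 1 > α Y_{B/s}`, so `Z' ≤ 0`. A nonnegative nonincreasing function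
converges, and since every coefficient of `Z` is at least `α Y_{B/s}`, each component is bounded
by `Z(0) / (α Y_{B/s})`.
-/

open Set Filter Topology

lemma antitoneOn_Ici_of_hasDerivAt_nonpos {f f' : ℝ → ℝ} {a : ℝ}
    (hf : ∀ t, a ≤ t → HasDerivAt f (f' t) t) (hf' : ∀ t, a < t → f' t ≤ 0) :
    AntitoneOn f (Ici a) := by
  apply antitoneOn_of_hasDerivWithinAt_nonpos (convex_Ici a)
  · exact fun t ht => (hf t ht).continuousAt.continuousWithinAt
  · rw [interior_Ici]
    exact fun t ht => (hf t (le_of_lt ht)).hasDerivWithinAt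
  · rw [interior_Ici]
    exact hf'

lemma AntitoneOn.exists_tendsto_atTop_of_forall_le {f : ℝ → ℝ} {a m : ℝ}
    (hf : AntitoneOn f (Ici a)) (hm : ∀ t, a ≤ t → m ≤ f t) :
    ∃ L, m ≤ L ∧ Tendsto f atTop (𝓝 L) := by
  set g : ℝ → ℝ := fun t => f (max t a)
  have hg : Antitone g := fun s t hst =>
    hf (le_max_right s a) (le_max_right t a) (max_le_max hst le_rfl)
  have hgm : ∀ t, m ≤ g t := fun t => hm _ (le_max_right t a)
  refine ⟨⨅ t, g t, le_ciInf hgm, ?_⟩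
  refine (tendsto_atTop_ciInf hg ⟨m, ?_⟩).congr' ?_
  · rintro _ ⟨t, rfl⟩
    exact hgm t
  · filter_upwards [eventually_ge_atTop a] with t ht
    simp only [g, max_eq_left ht]

lemma hasDerivAt_lyapunov {μ X B S : ℝ → ℝ} {KH α kd YB ms t : ℝ} (hkd : kd ≠ 0) (hYB : YB ≠ 0)
    (hX : HasDerivAt X (-KH * X t + α * kd * B t) t)
    (hB : HasDerivAt B ((μ (S t) - kd) * B t) t)
    (hS : HasDerivAt S (-(μ (S t) / YB + ms) * B t + KH * X t) t) :
    HasDerivAt (fun t => (1 + ms * YB / kd) * X t + α * B t + α * YB * S t)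
      (KH * (α * YB - (1 + ms * YB / kd)) * X t) t := by
  refine (((hX.const_mul _).add (hB.const_mul α)).add (hS.const_mul (α * YB))).congr_deriv ?_
  field_simp
  ring

theorem stmt_9_general (μ : ℝ → ℝ) (KH α kd YB ms : ℝ) (X B S : ℝ → ℝ)
    (hKH : 0 < KH) (hα0 : 0 < α) (hα1 : α < 1) (hkd : 0 < kd)
    (hYB : 0 < YB) (hYB1 : YB < 1) (hms : 0 < ms)
    (hpos : ∀ t, 0 ≤ t → 0 ≤ X t ∧ 0 ≤ B t ∧ 0 ≤ S t)
    (hODE : ∀ t, 0 ≤ t →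
      HasDerivAt X (-KH * X t + α * kd * B t) t ∧
      HasDerivAt B ((μ (S t) - kd) * B t) t ∧
      HasDerivAt S (-(μ (S t) / YB + ms) * B t + KH * X t) t) :
    (∀ t, 0 ≤ t → 0 ≤ (1 + ms * YB / kd) * X t + α * B t + α * YB * S t) ∧
    (∀ t₁ t₂, 0 ≤ t₁ → t₁ ≤ t₂ →
      (1 + ms * YB / kd) * X t₂ + α * B t₂ + α * YB * S t₂ ≤
        (1 + ms * YB / kd) * X t₁ + α * B t₁ + α * YB * S t₁) ∧
    (∃ Zinf : ℝ, 0 ≤ Zinf ∧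
      Filter.Tendsto (fun t => (1 + ms * YB / kd) * X t + α * B t + α * YB * S t)
        Filter.atTop (nhds Zinf)) ∧
    (∃ M : ℝ, ∀ t, 0 ≤ t → X t ≤ M ∧ B t ≤ M ∧ S t ≤ M) := by
  set c := 1 + ms * YB / kd
  set Z : ℝ → ℝ := fun t => c * X t + α * B t + α * YB * S t
  have hαYB : 0 < α * YB := mul_pos hα0 hYB
  have hαYB_lt_c : α * YB < c :=
    calc α * YB < 1 := mul_lt_one_of_nonneg_of_lt_one_left hα0.le hα1 hYB1.le
      _ ≤ c := le_add_of_nonneg_right (by positivity)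
  have hZ_nonneg : ∀ t, 0 ≤ t → 0 ≤ Z t := fun t ht => by
    obtain ⟨hXt, hBt, hSt⟩ := hpos t ht
    positivity
  have hZ_anti : AntitoneOn Z (Ici 0) := by
    refine antitoneOn_Ici_of_hasDerivAt_nonpos
      (fun t ht => hasDerivAt_lyapunov hkd.ne' hYB.ne' (hODE t ht).1 (hODE t ht).2.1 (hODE t ht).2.2)
      fun t ht => ?_
    have hXt := (hpos t ht.le).1
    have : KH * (α * YB - c) ≤ 0 := mul_nonpos_of_nonneg_of_nonpos hKH.le (by linarith)
    exact mul_nonpos_of_nonpos_of_nonneg this hXt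
  refine ⟨hZ_nonneg, fun t₁ t₂ h₁ h₁₂ => hZ_anti h₁ (h₁.trans h₁₂) h₁₂,
    hZ_anti.exists_tendsto_atTop_of_forall_le hZ_nonneg, Z 0 / (α * YB), fun t ht => ?_⟩
  obtain ⟨hXt, hBt, hSt⟩ := hpos t ht
  have hZt : c * X t + α * B t + α * YB * S t ≤ Z 0 := hZ_anti self_mem_Ici ht ht
  have hαYB_le_α : α * YB ≤ α := mul_le_of_le_one_right hα0.le hYB1.le
  simp only [le_div_iff₀ hαYB]
  refine ⟨?_, ?_, ?_⟩ <;> nlinarith [mul_le_mul_of_nonneg_right hαYB_lt_c.le hXt,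
    mul_le_mul_of_nonneg_right hαYB_le_α hBt]

/-- `Z = (1 + m_s Y_{B/s}/k_d) X + α B + α Y_{B/s} s` is nonnegative and
nonincreasing along solutions, hence converges to a finite limit `Z∞ ≥ 0`
as `t → ∞`, and `X`, `B`, `s` are bounded on `[0,∞)`. -/
theorem stmt_9 (μ : ℝ → ℝ) (KH α kd YB ms : ℝ) (X B S : ℝ → ℝ)
    (hμ : ContDiff ℝ 1 μ) (hμ0 : μ 0 = 0) (hμpos : ∀ x, 0 < x → 0 < μ x)
    (hKH : 0 < KH) (hα0 : 0 < α) (hα1 : α < 1) (hkd : 0 < kd)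
    (hYB : 0 < YB) (hYB1 : YB < 1) (hms : 0 < ms)
    (hpos : ∀ t, 0 ≤ t → 0 ≤ X t ∧ 0 ≤ B t ∧ 0 ≤ S t)
    (hODE : ∀ t, 0 ≤ t →
      HasDerivAt X (-KH * X t + α * kd * B t) t ∧
      HasDerivAt B ((μ (S t) - kd) * B t) t ∧
      HasDerivAt S (-(μ (S t) / YB + ms) * B t + KH * X t) t) :
    (∀ t, 0 ≤ t → 0 ≤ (1 + ms * YB / kd) * X t + α * B t + α * YB * S t) ∧
    (∀ t₁ t₂, 0 ≤ t₁ → t₁ ≤ t₂ →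
      (1 + ms * YB / kd) * X t₂ + α * B t₂ + α * YB * S t₂ ≤
        (1 + ms * YB / kd) * X t₁ + α * B t₁ + α * YB * S t₁) ∧
    (∃ Zinf : ℝ, 0 ≤ Zinf ∧
      Filter.Tendsto (fun t => (1 + ms * YB / kd) * X t + α * B t + α * YB * S t)
        Filter.atTop (nhds Zinf)) ∧
    (∃ M : ℝ, ∀ t, 0 ≤ t → X t ≤ M ∧ B t ≤ M ∧ S t ≤ M) :=
  stmt_9_general μ KH α kd YB ms X B S hKH hα0 hα1 hkd hYB hYB1 hms hpos hODE
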